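/- Let N' be an odd positive integer, N = 2N', let u₀, u₁ : ZMod N' → ZMod 4, and let s : ZMod N → ℂ be the interleaved sequence built from (u₀,u₁). Then ∑_{t ∈ ZMod N} |s(t)|² = 10·N. -/

import Mathlib

/-- For `a ∈ ZMod 4`, the complex number `i^a := Complex.I ^ a.val`. -/
noncomputable def zi (a : ZMod 4) : ℂ := Complex.I ^ a.val

/-- Periodic correlation of complex sequences of period `N` at shift `τ`:
`θ_{s,s'}(τ) = ∑_t s(t+τ) · conj (s'(t))`. -/
noncomputable def pcorr {N : ℕ} [NeZero N] (s s' : ZMod N → ℂ) (τ : ZMod N) : ℂ :=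
  ∑ t : ZMod N, s (t + τ) * (starRingEnd ℂ) (s' t)

/-- Periodic correlation of quaternary sequences of period `N` at shift `τ`:
`θ_{u,v}(τ) = ∑_t i^{u(t+τ)} · conj (i^{v(t)})`. -/
noncomputable def qcorr {N : ℕ} [NeZero N] (u v : ZMod N → ZMod 4) (τ : ZMod N) : ℂ :=
  ∑ t : ZMod N, zi (u (t + τ)) * (starRingEnd ℂ) (zi (v t))

/-- The natural reduction `ZMod (2·N') → ZMod N'`. -/
noncomputable def redN (N' : ℕ) (t : ZMod (2 * N')) : ZMod N' :=
  ZMod.castHom (dvd_mul_left N' 2) (ZMod N') t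

/-- The interleaved sequence of period `N = 2·N'` built from the quaternary sequences
`u₀, u₁` of period `N'`:  `s(t) = (1+i)·(i^{u₁(t̄)} + 2·i^{u₀(t̄)})` for even `t` and
`s(t) = (1+i)·i·(i^{u₀(t̄)} − 2·i^{u₁(t̄)})` for odd `t`, where `t̄ = t mod N'`. -/
noncomputable def interleave {N' : ℕ} (u₀ u₁ : ZMod N' → ZMod 4) :
    ZMod (2 * N') → ℂ := fun t =>
  if Even t.val then
    (1 + Complex.I) * (zi (u₁ (redN N' t)) + 2 * zi (u₀ (redN N' t)))
  else
    (1 + Complex.I) * Complex.I * (zi (u₀ (redN N' t)) - 2 * zi (u₁ (redN N' t)))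

/-! Since `N'` is odd, the shift `t ↦ t + N'` of `ZMod (2 * N')` swaps the parity of `t` and fixes
its reduction `t̄` mod `N'`. So it pairs the even-branch value of `s` at `t̄` with the odd-branch
value at the same `t̄`, and for unit vectors `A, B` we get
`|1+i|² (|B + 2A|² + |A - 2B|²) = 2 · 5 (|A|² + |B|²) = 20`, the cross terms cancelling.
Summing over all `t` counts every point twice, so `2 E = 20 N`. -/

open Finset

theorem norm_add_two_smul_sq_add_norm_sub_two_smul_sq {F : Type*} [NormedAddCommGroup F]
    [InnerProductSpace ℝ F] (a b : F) :
    ‖b + (2 : ℝ) • a‖ ^ 2 + ‖a - (2 : ℝ) • b‖ ^ 2 = 5 * (‖a‖ ^ 2 + ‖b‖ ^ 2) := by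
  rw [norm_add_sq_real, norm_sub_sq_real, real_inner_smul_right, real_inner_smul_right,
    norm_smul, norm_smul, real_inner_comm a b]
  norm_num
  ring

theorem sum_add_sum_eq_card_nsmul_of_add_shift {G M : Type*} [AddGroup G] [Fintype G]
    [AddCommMonoid M] (f : G → M) (c : G) (k : M) (h : ∀ t, f t + f (t + c) = k) :
    ∑ t, f t + ∑ t, f t = Fintype.card G • k := by
  have hshift : ∑ t, f (t + c) = ∑ t, f t := Equiv.sum_comp (Equiv.addRight c) f
  nth_rw 2 [← hshift]
  simp [← sum_add_distrib, h]

theorem norm_zi (a : ZMod 4) : ‖zi a‖ = 1 := by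
  simp [zi]

theorem redN_add_natCast_self (N' : ℕ) (t : ZMod (2 * N')) :
    redN N' (t + N') = redN N' t := by
  simp [redN]

theorem even_val_add_natCast_iff {N' : ℕ} (hodd : Odd N') (t : ZMod (2 * N')) :
    Even (t + N').val ↔ ¬Even t.val := by
  have : NeZero N' := ⟨hodd.pos.ne'⟩
  have hN' : ((N' : ZMod (2 * N'))).val = N' :=
    ZMod.val_cast_of_lt (by have := hodd.pos; omega)
  rw [ZMod.val_add, hN', Nat.even_iff, Nat.mod_mod_of_dvd _ (dvd_mul_right 2 N'),
    ← Nat.even_iff, Nat.even_add]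
  have := Nat.not_even_iff_odd.mpr hodd
  tauto

theorem norm_sq_even_branch_add_norm_sq_odd_branch (A B : ℂ) (hA : ‖A‖ = 1) (hB : ‖B‖ = 1) :
    ‖(1 + Complex.I) * (B + 2 * A)‖ ^ 2
      + ‖(1 + Complex.I) * Complex.I * (A - 2 * B)‖ ^ 2 = 20 := by
  have h := norm_add_two_smul_sq_add_norm_sub_two_smul_sq A B
  simp only [Complex.real_smul, Complex.ofReal_ofNat, hA, hB] at h
  have h1I : ‖1 + Complex.I‖ ^ 2 = 2 := by
    norm_num [Complex.sq_norm, Complex.normSq_apply]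
  simp only [norm_mul, Complex.norm_I, mul_one, mul_pow, h1I]
  linarith

theorem norm_sq_interleave_add_natCast {N' : ℕ} (hodd : Odd N') (u₀ u₁ : ZMod N' → ZMod 4)
    (t : ZMod (2 * N')) :
    ‖interleave u₀ u₁ t‖ ^ 2 + ‖interleave u₀ u₁ (t + N')‖ ^ 2 = 20 := by
  have hpar := even_val_add_natCast_iff hodd t
  by_cases ht : Even t.val
  · simp only [interleave, if_pos ht, if_neg fun h => hpar.mp h ht, redN_add_natCast_self]
    exact norm_sq_even_branch_add_norm_sq_odd_branch _ _ (norm_zi _) (norm_zi _)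
  · simp only [interleave, if_neg ht, if_pos (hpar.mpr ht), redN_add_natCast_self]
    rw [add_comm]
    exact norm_sq_even_branch_add_norm_sq_odd_branch _ _ (norm_zi _) (norm_zi _)

/-- Every interleaved sequence of period `N = 2·N'` has energy exactly
`10·N`. -/
theorem interleaved_sequence_energy (N' : ℕ) (hodd : Odd N') [NeZero N']
    (u₀ u₁ : ZMod N' → ZMod 4) :
    ∑ t : ZMod (2 * N'), ‖interleave u₀ u₁ t‖ ^ 2
      = 10 * (2 * (N' : ℝ)) := by
  have h := sum_add_sum_eq_card_nsmul_of_add_shift _ _ _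
    (norm_sq_interleave_add_natCast hodd u₀ u₁)
  rw [ZMod.card, nsmul_eq_mul] at h
  push_cast at h
  linarith
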